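/- For every n ≥ 2, the number of 231-avoiding permutations of length n with π(1) < π(2) equals C_{n−1}. -/
import Mathlib

def Avoids231 {n : ℕ} (π : Fin n → Fin n) : Prop :=
  ¬ ∃ i j k : Fin n, i < j ∧ j < k ∧ π k < π i ∧ π i < π j

open Equiv Finset

attribute [local instance] Classical.propDecidable

namespace Av231

variable {m : ℕ} {π : Perm (Fin (m+1))} {p : Fin (m+1)}

lemma lt_last (hp : π p = Fin.last m) {a : Fin (m+1)} (ha : a ≠ p) :
    π a < Fin.last m :=
  lt_of_le_of_ne (Fin.le_last _) (fun he => ha (π.injective (he.trans hp.symm)))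

lemma L1 (hav : Avoids231 ⇑π) (hp : π p = Fin.last m) {a b : Fin (m+1)}
    (ha : a < p) (hb : p < b) : π a < π b := by
  by_contra h
  have hne : π b ≠ π a := fun he => (ha.trans hb).ne' (π.injective he)
  have h1 : π b < π a := lt_of_le_of_ne (not_lt.1 h) hne
  have h2 : π a < π p := by rw [hp]; exact lt_last hp ha.ne
  exact hav ⟨a, p, b, ha, hb, h1, h2⟩

lemma L2 (hav : Avoids231 ⇑π) (hp : π p = Fin.last m) {a : Fin (m+1)}
    (ha : a < p) : (π a).val < p.val := by
  have hsub : (Finset.Ici p).image π ⊆ Finset.Ioi (π a) := by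
    intro x hx
    simp only [Finset.mem_image, Finset.mem_Ici] at hx
    obtain ⟨b, hb, rfl⟩ := hx
    rcases eq_or_lt_of_le hb with rfl | hb'
    · simpa [Finset.mem_Ioi, hp] using lt_last hp ha.ne
    · exact Finset.mem_Ioi.2 (L1 hav hp ha hb')
  have hc := Finset.card_le_card hsub
  rw [Finset.card_image_of_injective _ π.injective, Fin.card_Ici, Fin.card_Ioi] at hc
  have h1 : p.val ≤ m := Fin.is_le p
  have h2 : (π a).val ≤ m := Fin.is_le _
  have h3 : a.val < p.val := ha
  omega

lemma image_Iio (hav : Avoids231 ⇑π) (hp : π p = Fin.last m) :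
    (Finset.Iio p).image π = Finset.Iio p := by
  apply Finset.eq_of_subset_of_card_le
  · intro x hx
    simp only [Finset.mem_image, Finset.mem_Iio] at hx ⊢
    obtain ⟨a, ha, rfl⟩ := hx
    exact L2 hav hp ha
  · rw [Finset.card_image_of_injective _ π.injective]

lemma L3a (hav : Avoids231 ⇑π) (hp : π p = Fin.last m) {b : Fin (m+1)}
    (hb : p < b) : p.val ≤ (π b).val := by
  by_contra h
  have hmem : π b ∈ Finset.Iio p := Finset.mem_Iio.2 (by omega)
  rw [← image_Iio hav hp] at hmem
  simp only [Finset.mem_image, Finset.mem_Iio] at hmem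
  obtain ⟨a, ha, hab⟩ := hmem
  have : a = b := π.injective hab
  subst this
  exact absurd hb (not_lt.2 ha.le)

lemma L3b (hp : π p = Fin.last m) {b : Fin (m+1)} (hb : p < b) :
    (π b).val < m := by
  have h1 : π b < Fin.last m := lt_last hp hb.ne'
  simpa [Fin.lt_def] using h1



/-- restriction of `π` to positions before `p`. -/
noncomputable def sig1 (hav : Avoids231 ⇑π) (hp : π p = Fin.last m) :
    Perm (Fin p.val) :=
  Equiv.ofBijective
    (fun a => ⟨(π ⟨a.val, by omega⟩).val,
      L2 hav hp (show (⟨a.val, by omega⟩ : Fin (m+1)) < p from a.isLt)⟩)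
    (Finite.injective_iff_bijective.1 (by
      intro a b hab
      have h1 := Fin.ext_iff.1 hab
      simp only at h1
      have h2 : (⟨a.val, by omega⟩ : Fin (m+1)) = ⟨b.val, by omega⟩ :=
        π.injective (Fin.ext h1)
      have h3 := Fin.ext_iff.1 h2
      simp only at h3
      exact Fin.ext h3))

/-- restriction of `π` to positions after `p`. -/
noncomputable def sig2 (hav : Avoids231 ⇑π) (hp : π p = Fin.last m) :
    Perm (Fin (m - p.val)) :=
  Equiv.ofBijective
    (fun b => ⟨(π ⟨p.val + 1 + b.val, by omega⟩).val - p.val, by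
      have hlt : p < (⟨p.val + 1 + b.val, by omega⟩ : Fin (m+1)) := by
        simp only [Fin.lt_def]; omega
      have := L3b hp hlt
      have := L3a hav hp hlt
      omega⟩)
    (Finite.injective_iff_bijective.1 (by
      intro a b hab
      have hla : p < (⟨p.val + 1 + a.val, by omega⟩ : Fin (m+1)) := by
        simp only [Fin.lt_def]; omega
      have hlb : p < (⟨p.val + 1 + b.val, by omega⟩ : Fin (m+1)) := by
        simp only [Fin.lt_def]; omega
      have h1 := Fin.ext_iff.1 hab
      simp only at h1
      have h2 : (π ⟨p.val + 1 + a.val, by omega⟩).val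
          = (π ⟨p.val + 1 + b.val, by omega⟩).val := by
        have := L3a hav hp hla
        have := L3a hav hp hlb
        omega
      have h3 : (⟨p.val + 1 + a.val, by omega⟩ : Fin (m+1))
          = ⟨p.val + 1 + b.val, by omega⟩ := π.injective (Fin.ext h2)
      have := congrArg Fin.val h3
      simp only at this
      exact Fin.ext (by omega)))

lemma sig1_avoids (hav : Avoids231 ⇑π) (hp : π p = Fin.last m) :
    Avoids231 ⇑(sig1 hav hp) := by
  rintro ⟨i, j, k, hij, hjk, hki, hij2⟩
  refine hav ⟨⟨i.val, by omega⟩, ⟨j.val, by omega⟩, ⟨k.val, by omega⟩,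
    hij, hjk, hki, hij2⟩

lemma sig2_avoids (hav : Avoids231 ⇑π) (hp : π p = Fin.last m) :
    Avoids231 ⇑(sig2 hav hp) := by
  rintro ⟨i, j, k, hij, hjk, hki, hij2⟩
  have key : ∀ a b : Fin (m - p.val), sig2 hav hp a < sig2 hav hp b →
      π ⟨p.val + 1 + a.val, by omega⟩ < π ⟨p.val + 1 + b.val, by omega⟩ := by
    intro a b hab
    have h1 : (π ⟨p.val + 1 + a.val, by omega⟩).val - p.val
        < (π ⟨p.val + 1 + b.val, by omega⟩).val - p.val := hab
    have h2 : p.val ≤ (π ⟨p.val + 1 + a.val, by omega⟩).val :=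
      L3a hav hp (by simp only [Fin.lt_def]; omega)
    have h3 : p.val ≤ (π ⟨p.val + 1 + b.val, by omega⟩).val :=
      L3a hav hp (by simp only [Fin.lt_def]; omega)
    simp only [Fin.lt_def]
    omega
  refine hav ⟨⟨p.val + 1 + i.val, by omega⟩, ⟨p.val + 1 + j.val, by omega⟩,
    ⟨p.val + 1 + k.val, by omega⟩, ?_, ?_, key _ _ hki, key _ _ hij2⟩
  · simp only [Fin.lt_def]; have : i.val < j.val := hij; omega
  · simp only [Fin.lt_def]; have : j.val < k.val := hjk; omega



def glueFun (p : Fin (m+1)) (σ1 : Perm (Fin p.val)) (σ2 : Perm (Fin (m - p.val)))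
    (i : Fin (m+1)) : Fin (m+1) :=
  if h : i.val < p.val then
    ⟨(σ1 ⟨i.val, h⟩).val, by have := (σ1 ⟨i.val, h⟩).isLt; omega⟩
  else if h2 : i.val = p.val then Fin.last m
  else ⟨(σ2 ⟨i.val - p.val - 1, by have := i.isLt; omega⟩).val + p.val, by
    have := (σ2 ⟨i.val - p.val - 1, by have := i.isLt; omega⟩).isLt
    have := p.isLt; omega⟩

variable {σ1 : Perm (Fin p.val)} {σ2 : Perm (Fin (m - p.val))}

lemma gval1 {i : Fin (m+1)} (h : i.val < p.val) :
    (glueFun p σ1 σ2 i).val = (σ1 ⟨i.val, h⟩).val := by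
  unfold glueFun; rw [dif_pos h]

lemma gval2 {i : Fin (m+1)} (h : i.val = p.val) :
    (glueFun p σ1 σ2 i).val = m := by
  unfold glueFun; rw [dif_neg (by omega), dif_pos h]; rfl

lemma gval3 {i : Fin (m+1)} (h : p.val < i.val) :
    (glueFun p σ1 σ2 i).val
      = (σ2 ⟨i.val - p.val - 1, by have := i.isLt; omega⟩).val + p.val := by
  unfold glueFun; rw [dif_neg (by omega), dif_neg (by omega)]

lemma grange1 {i : Fin (m+1)} (h : i.val < p.val) :
    (glueFun p σ1 σ2 i).val < p.val := by
  rw [gval1 h]; exact (σ1 ⟨i.val, h⟩).isLt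

lemma grange3 {i : Fin (m+1)} (h : p.val < i.val) :
    p.val ≤ (glueFun p σ1 σ2 i).val ∧ (glueFun p σ1 σ2 i).val < m := by
  rw [gval3 h]
  have := (σ2 ⟨i.val - p.val - 1, by have := i.isLt; omega⟩).isLt
  omega

lemma glueFun_injective (σ1 : Perm (Fin p.val)) (σ2 : Perm (Fin (m - p.val))) :
    Function.Injective (glueFun p σ1 σ2) := by
  intro i1 i2 he
  have hv := Fin.ext_iff.1 he
  apply Fin.ext
  have hp := p.isLt
  rcases lt_trichotomy i1.val p.val with c1 | c1 | c1 <;>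
    rcases lt_trichotomy i2.val p.val with c2 | c2 | c2
  · rw [gval1 (σ1 := σ1) (σ2 := σ2) c1, gval1 (σ1 := σ1) (σ2 := σ2) c2] at hv
    have h2 : (⟨i1.val, c1⟩ : Fin p.val) = ⟨i2.val, c2⟩ := σ1.injective (Fin.ext hv)
    have h3 := Fin.ext_iff.1 h2
    simpa using h3
  · have := grange1 (σ1 := σ1) (σ2 := σ2) c1
    rw [hv, gval2 c2] at this; omega
  · have := grange1 (σ1 := σ1) (σ2 := σ2) c1
    have h2 := grange3 (σ1 := σ1) (σ2 := σ2) c2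
    omega
  · have := grange1 (σ1 := σ1) (σ2 := σ2) c2
    rw [← hv, gval2 c1] at this; omega
  · omega
  · have h2 := grange3 (σ1 := σ1) (σ2 := σ2) c2
    rw [← hv, gval2 c1] at h2; omega
  · have := grange1 (σ1 := σ1) (σ2 := σ2) c2
    have h2 := grange3 (σ1 := σ1) (σ2 := σ2) c1
    omega
  · have h2 := grange3 (σ1 := σ1) (σ2 := σ2) c1
    rw [hv, gval2 c2] at h2; omega
  · rw [gval3 (σ1 := σ1) (σ2 := σ2) c1, gval3 (σ1 := σ1) (σ2 := σ2) c2] at hv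
    have h2 : (⟨i1.val - p.val - 1, by have := i1.isLt; omega⟩ : Fin (m - p.val))
        = ⟨i2.val - p.val - 1, by have := i2.isLt; omega⟩ :=
      σ2.injective (Fin.ext (by omega))
    have h3 := Fin.ext_iff.1 h2
    simp only at h3
    omega

noncomputable def glueP (p : Fin (m+1)) (σ1 : Perm (Fin p.val))
    (σ2 : Perm (Fin (m - p.val))) : Perm (Fin (m+1)) :=
  Equiv.ofBijective _ (Finite.injective_iff_bijective.1 (glueFun_injective σ1 σ2))

lemma glueP_apply (i : Fin (m+1)) : glueP p σ1 σ2 i = glueFun p σ1 σ2 i := rfl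

lemma glueP_last : glueP p σ1 σ2 p = Fin.last m := by
  apply Fin.ext
  rw [glueP_apply, gval2 rfl]
  rfl

lemma glueP_avoids (h1 : Avoids231 ⇑σ1) (h2 : Avoids231 ⇑σ2) :
    Avoids231 ⇑(glueP p σ1 σ2) := by
  rintro ⟨i, j, k, hij, hjk, hki, hij2⟩
  rw [glueP_apply, glueP_apply] at hki hij2
  replace hki : (glueFun p σ1 σ2 k).val < (glueFun p σ1 σ2 i).val := hki
  replace hij2 : (glueFun p σ1 σ2 i).val < (glueFun p σ1 σ2 j).val := hij2
  have hij' : i.val < j.val := hij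
  have hjk' : j.val < k.val := hjk
  have hp := p.isLt
  rcases lt_trichotomy i.val p.val with hi | hi | hi
  · by_cases hk : k.val < p.val
    · have hj : j.val < p.val := by omega
      rw [gval1 (σ1 := σ1) (σ2 := σ2) hk, gval1 (σ1 := σ1) (σ2 := σ2) hi] at hki
      rw [gval1 (σ1 := σ1) (σ2 := σ2) hi, gval1 (σ1 := σ1) (σ2 := σ2) hj] at hij2
      exact h1 ⟨⟨i.val, hi⟩, ⟨j.val, hj⟩, ⟨k.val, hk⟩, hij', hjk', hki, hij2⟩
    · have hgi := grange1 (σ1 := σ1) (σ2 := σ2) hi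
      rcases lt_trichotomy k.val p.val with hk' | hk' | hk'
      · omega
      · rw [gval2 hk'] at hki; omega
      · have := grange3 (σ1 := σ1) (σ2 := σ2) hk'; omega
  · rw [gval2 hi] at hij2
    have : (glueFun p σ1 σ2 j).val < m + 1 := (glueFun p σ1 σ2 j).isLt
    omega
  · have hj : p.val < j.val := by omega
    have hk : p.val < k.val := by omega
    rw [gval3 (σ1 := σ1) (σ2 := σ2) hk, gval3 (σ1 := σ1) (σ2 := σ2) hi] at hki
    rw [gval3 (σ1 := σ1) (σ2 := σ2) hi, gval3 (σ1 := σ1) (σ2 := σ2) hj] at hij2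
    exact h2 ⟨⟨i.val - p.val - 1, by have := i.isLt; omega⟩,
      ⟨j.val - p.val - 1, by have := j.isLt; omega⟩,
      ⟨k.val - p.val - 1, by have := k.isLt; omega⟩,
      by simp only [Fin.lt_def]; omega, by simp only [Fin.lt_def]; omega,
      by simp only [Fin.lt_def]; omega, by simp only [Fin.lt_def]; omega⟩


end Av231
namespace Av231
open Equiv Finset

variable {m : ℕ} {π : Perm (Fin (m+1))} {p : Fin (m+1)}

lemma sig1_val (hav : Avoids231 ⇑π) (hp : π p = Fin.last m) (a : Fin p.val) :
    (sig1 hav hp a).val = (π ⟨a.val, by omega⟩).val := rfl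

lemma sig2_val (hav : Avoids231 ⇑π) (hp : π p = Fin.last m) (b : Fin (m - p.val)) :
    (sig2 hav hp b).val = (π ⟨p.val + 1 + b.val, by omega⟩).val - p.val := rfl

lemma perm_of_symm (h : π.symm (Fin.last m) = p) : π p = Fin.last m := by
  rw [← h, Equiv.apply_symm_apply]

noncomputable def fiberEquiv (m : ℕ) (p : Fin (m+1)) :
    {π : Perm (Fin (m+1)) // Avoids231 ⇑π ∧ π.symm (Fin.last m) = p}
      ≃ {σ : Perm (Fin p.val) // Avoids231 ⇑σ}
        × {σ : Perm (Fin (m - p.val)) // Avoids231 ⇑σ} where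
  toFun x :=
    (⟨sig1 x.2.1 (perm_of_symm x.2.2), sig1_avoids _ _⟩,
     ⟨sig2 x.2.1 (perm_of_symm x.2.2), sig2_avoids _ _⟩)
  invFun y :=
    ⟨glueP p y.1.1 y.2.1,
     glueP_avoids y.1.2 y.2.2,
     by rw [Equiv.symm_apply_eq]; exact glueP_last.symm⟩
  left_inv := by
    rintro ⟨π, hav, hsym⟩
    have hp : π p = Fin.last m := perm_of_symm hsym
    apply Subtype.ext
    apply Equiv.ext
    intro i
    apply Fin.ext
    show _ = (π i).val
    rw [glueP_apply]
    have hpm := p.isLt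
    rcases lt_trichotomy i.val p.val with hi | hi | hi
    · rw [gval1 hi, sig1_val hav hp]
    · rw [gval2 hi]
      have : i = p := Fin.ext hi
      rw [this, hp]
      rfl
    · rw [gval3 hi, sig2_val hav hp]
      have hidx : (⟨p.val + 1 + (i.val - p.val - 1), by have := i.isLt; omega⟩ :
          Fin (m+1)) = i := Fin.ext (by simp only; omega)
      rw [hidx]
      have := L3a hav hp (show p < i from hi)
      omega
  right_inv := by
    rintro ⟨⟨σ1, h1⟩, ⟨σ2, h2⟩⟩
    have hpm := p.isLt
    apply Prod.ext
    · apply Subtype.ext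
      apply Equiv.ext
      intro a
      apply Fin.ext
      show _ = (σ1 a).val
      rw [sig1_val]
      rw [show ((glueP p σ1 σ2) ⟨a.val, by omega⟩).val
            = (glueFun p σ1 σ2 ⟨a.val, by omega⟩).val from rfl]
      rw [gval1 (show (⟨a.val, by omega⟩ : Fin (m+1)).val < p.val from a.isLt)]
    · apply Subtype.ext
      apply Equiv.ext
      intro b
      apply Fin.ext
      show _ = (σ2 b).val
      rw [sig2_val]
      rw [show ((glueP p σ1 σ2) ⟨p.val + 1 + b.val, by omega⟩).val
            = (glueFun p σ1 σ2 ⟨p.val + 1 + b.val, by omega⟩).val from rfl]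
      rw [gval3 (show p.val < (⟨p.val + 1 + b.val, by omega⟩ : Fin (m+1)).val by
        simp only; omega)]
      have hidx : (⟨(⟨p.val + 1 + b.val, by omega⟩ : Fin (m+1)).val - p.val - 1,
          by have := b.isLt; simp only; omega⟩ : Fin (m - p.val)) = b :=
        Fin.ext (by simp only; omega)
      rw [hidx]
      omega

end Av231
namespace Av231
open Equiv Finset

attribute [local instance] Classical.propDecidable

noncomputable def AvCard (k : ℕ) : ℕ :=
  Nat.card {π : Perm (Fin k) // Avoids231 ⇑π}

lemma fiber_card (m : ℕ) (p : Fin (m+1)) :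
    Nat.card {π : Perm (Fin (m+1)) // Avoids231 ⇑π ∧ π.symm (Fin.last m) = p}
      = AvCard p.val * AvCard (m - p.val) := by
  rw [AvCard, AvCard, ← Nat.card_prod]
  exact Nat.card_congr (fiberEquiv m p)

lemma avcard_succ (m : ℕ) :
    AvCard (m+1) = ∑ p : Fin (m+1), AvCard p.val * AvCard (m - p.val) := by
  have e1 : {π : Perm (Fin (m+1)) // Avoids231 ⇑π}
      ≃ Σ p : Fin (m+1), {x : {π : Perm (Fin (m+1)) // Avoids231 ⇑π} //
          x.1.symm (Fin.last m) = p} :=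
    (Equiv.sigmaFiberEquiv (fun x : {π : Perm (Fin (m+1)) // Avoids231 ⇑π} =>
      x.1.symm (Fin.last m))).symm
  rw [AvCard, Nat.card_congr e1]
  have e2 : ∀ p : Fin (m+1),
      {x : {π : Perm (Fin (m+1)) // Avoids231 ⇑π} // x.1.symm (Fin.last m) = p}
        ≃ {π : Perm (Fin (m+1)) // Avoids231 ⇑π ∧ π.symm (Fin.last m) = p} :=
    fun p => Equiv.subtypeSubtypeEquivSubtypeInter
      (fun π : Perm (Fin (m+1)) => Avoids231 ⇑π) (fun π => π.symm (Fin.last m) = p)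
  rw [Nat.card_eq_fintype_card, Fintype.card_sigma]
  refine Finset.sum_congr rfl fun p _ => ?_
  rw [← fiber_card m p, ← Nat.card_eq_fintype_card]
  exact Nat.card_congr (e2 p)

lemma avcard_zero : AvCard 0 = 1 := by
  rw [AvCard, Nat.card_eq_one_iff_unique]
  constructor
  · constructor
    intro x y
    apply Subtype.ext
    apply Equiv.ext
    intro i
    exact i.elim0
  · exact ⟨1, by rintro ⟨i, _⟩; exact i.elim0⟩

lemma avcard_eq (k : ℕ) : AvCard k = catalan k := by
  induction k using Nat.strong_induction_on with
  | _ k ih =>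
    match k with
    | 0 => simpa using avcard_zero
    | m + 1 =>
      rw [avcard_succ, catalan_succ]
      refine Finset.sum_congr rfl fun p _ => ?_
      rw [ih p.val (by omega), ih (m - p.val) (by omega)]

end Av231
namespace Av231
open Equiv Finset

variable {m : ℕ}

lemma val_pos (π : Perm (Fin (m+1))) (h0 : π 0 = 0) {a : Fin (m+1)}
    (ha : a ≠ 0) : 0 < (π a).val := by
  rcases Nat.eq_zero_or_pos (π a).val with h | h
  · exact absurd (π.injective ((Fin.ext h).trans h0.symm)) ha
  · exact h

noncomputable def red (π : Perm (Fin (m+1))) (h0 : π 0 = 0) : Perm (Fin m) :=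
  Equiv.ofBijective
    (fun a => ⟨(π ⟨a.val + 1, by omega⟩).val - 1, by
      have h1 := (π ⟨a.val + 1, by omega⟩).isLt
      have h2 := val_pos π h0 (a := ⟨a.val + 1, by omega⟩) (by
        intro he
        have := Fin.ext_iff.1 he
        simp at this)
      omega⟩)
    (Finite.injective_iff_bijective.1 (by
      intro a b hab
      have hv := Fin.ext_iff.1 hab
      simp only at hv
      have ha := val_pos π h0 (a := ⟨a.val + 1, by omega⟩) (by
        intro he; have := Fin.ext_iff.1 he; simp at this)
      have hb := val_pos π h0 (a := ⟨b.val + 1, by omega⟩) (by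
        intro he; have := Fin.ext_iff.1 he; simp at this)
      have hv2 : (π ⟨a.val + 1, by omega⟩).val = (π ⟨b.val + 1, by omega⟩).val := by
        omega
      have h3 := Fin.ext_iff.1 (π.injective (Fin.ext hv2))
      simp only at h3
      exact Fin.ext (by omega)))

lemma red_val (π : Perm (Fin (m+1))) (h0 : π 0 = 0) (a : Fin m) :
    (red π h0 a).val = (π ⟨a.val + 1, by omega⟩).val - 1 := rfl

lemma red_avoids (π : Perm (Fin (m+1))) (hav : Avoids231 ⇑π) (h0 : π 0 = 0) :
    Avoids231 ⇑(red π h0) := by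
  rintro ⟨i, j, k, hij, hjk, hki, hij2⟩
  have key : ∀ a b : Fin m, red π h0 a < red π h0 b →
      π ⟨a.val + 1, by omega⟩ < π ⟨b.val + 1, by omega⟩ := by
    intro a b hab
    have h1 : (red π h0 a).val < (red π h0 b).val := hab
    rw [red_val, red_val] at h1
    have ha := val_pos π h0 (a := ⟨a.val + 1, by omega⟩) (by
      intro he; have := Fin.ext_iff.1 he; simp at this)
    have hb := val_pos π h0 (a := ⟨b.val + 1, by omega⟩) (by
      intro he; have := Fin.ext_iff.1 he; simp at this)
    simp only [Fin.lt_def]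
    omega
  refine hav ⟨⟨i.val + 1, by omega⟩, ⟨j.val + 1, by omega⟩, ⟨k.val + 1, by omega⟩,
    ?_, ?_, key _ _ hki, key _ _ hij2⟩
  · simp only [Fin.lt_def]; have : i.val < j.val := hij; omega
  · simp only [Fin.lt_def]; have : j.val < k.val := hjk; omega

def extFun (σ : Perm (Fin m)) (i : Fin (m+1)) : Fin (m+1) :=
  if h : i.val = 0 then 0
  else ⟨(σ ⟨i.val - 1, by have := i.isLt; omega⟩).val + 1, by
    have := (σ ⟨i.val - 1, by have := i.isLt; omega⟩).isLt; omega⟩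

lemma extFun_val0 (σ : Perm (Fin m)) {i : Fin (m+1)} (h : i.val = 0) :
    (extFun σ i).val = 0 := by
  unfold extFun; rw [dif_pos h]; rfl

lemma extFun_valS (σ : Perm (Fin m)) {i : Fin (m+1)} (h : 0 < i.val) :
    (extFun σ i).val = (σ ⟨i.val - 1, by have := i.isLt; omega⟩).val + 1 := by
  unfold extFun; rw [dif_neg (by omega)]

noncomputable def extP (σ : Perm (Fin m)) : Perm (Fin (m+1)) :=
  Equiv.ofBijective (extFun σ) (Finite.injective_iff_bijective.1 (by
    intro i1 i2 he
    have hv := Fin.ext_iff.1 he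
    apply Fin.ext
    rcases Nat.eq_zero_or_pos i1.val with c1 | c1 <;>
      rcases Nat.eq_zero_or_pos i2.val with c2 | c2
    · omega
    · rw [extFun_val0 σ c1, extFun_valS σ c2] at hv; omega
    · rw [extFun_valS σ c1, extFun_val0 σ c2] at hv; omega
    · rw [extFun_valS σ c1, extFun_valS σ c2] at hv
      have h2 : (⟨i1.val - 1, by have := i1.isLt; omega⟩ : Fin m)
          = ⟨i2.val - 1, by have := i2.isLt; omega⟩ := σ.injective (Fin.ext (by omega))
      have h3 := Fin.ext_iff.1 h2
      simp only at h3
      omega))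

lemma extP_zero (σ : Perm (Fin m)) : extP σ 0 = 0 := by
  apply Fin.ext
  rw [show (extP σ 0).val = (extFun σ 0).val from rfl, extFun_val0 σ rfl]
  simp

lemma extP_avoids (σ : Perm (Fin m)) (hσ : Avoids231 ⇑σ) :
    Avoids231 ⇑(extP σ) := by
  rintro ⟨i, j, k, hij, hjk, hki, hij2⟩
  replace hki : (extFun σ k).val < (extFun σ i).val := hki
  replace hij2 : (extFun σ i).val < (extFun σ j).val := hij2
  have hij' : i.val < j.val := hij
  have hjk' : j.val < k.val := hjk
  rcases Nat.eq_zero_or_pos i.val with hi | hi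
  · rw [extFun_val0 σ hi] at hki; omega
  · have hj : 0 < j.val := by omega
    have hk : 0 < k.val := by omega
    rw [extFun_valS σ hk, extFun_valS σ hi] at hki
    rw [extFun_valS σ hi, extFun_valS σ hj] at hij2
    exact hσ ⟨⟨i.val - 1, by have := i.isLt; omega⟩,
      ⟨j.val - 1, by have := j.isLt; omega⟩,
      ⟨k.val - 1, by have := k.isLt; omega⟩,
      by simp only [Fin.lt_def]; omega, by simp only [Fin.lt_def]; omega,
      by simp only [Fin.lt_def]; omega, by simp only [Fin.lt_def]; omega⟩

noncomputable def zeroEquiv (m : ℕ) :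
    {π : Perm (Fin (m+1)) // Avoids231 ⇑π ∧ π 0 = 0}
      ≃ {σ : Perm (Fin m) // Avoids231 ⇑σ} where
  toFun x := ⟨red x.1 x.2.2, red_avoids x.1 x.2.1 x.2.2⟩
  invFun y := ⟨extP y.1, extP_avoids y.1 y.2, extP_zero y.1⟩
  left_inv := by
    rintro ⟨π, hav, h0⟩
    apply Subtype.ext
    apply Equiv.ext
    intro i
    apply Fin.ext
    show (extFun (red π h0) i).val = (π i).val
    rcases Nat.eq_zero_or_pos i.val with hi | hi
    · rw [extFun_val0 _ hi]
      have : i = 0 := Fin.ext (by simpa using hi)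
      rw [this, h0]
      simp
    · rw [extFun_valS _ hi, red_val]
      have hidx : (⟨(i.val - 1) + 1, by have := i.isLt; omega⟩ : Fin (m+1)) = i :=
        Fin.ext (by simp only; omega)
      rw [hidx]
      have := val_pos π h0 (a := i) (by intro he; rw [he] at hi; simp at hi)
      omega
  right_inv := by
    rintro ⟨σ, hσ⟩
    apply Subtype.ext
    apply Equiv.ext
    intro a
    apply Fin.ext
    show _ = (σ a).val
    rw [red_val]
    rw [show ((extP σ) ⟨a.val + 1, by omega⟩).val
          = (extFun σ ⟨a.val + 1, by omega⟩).val from rfl]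
    rw [extFun_valS σ (by simp only; omega)]
    have hidx : (⟨(⟨a.val + 1, by omega⟩ : Fin (m+1)).val - 1,
        by have := a.isLt; simp only; omega⟩ : Fin m) = a :=
      Fin.ext (by simp only; omega)
    rw [hidx]
    omega

lemma card_zero_fix (m : ℕ) :
    Nat.card {π : Perm (Fin (m+1)) // Avoids231 ⇑π ∧ π 0 = 0} = AvCard m :=
  Nat.card_congr (zeroEquiv m)

end Av231

theorem count_av231_initial_ascent (n : ℕ) (hn : 2 ≤ n) :
    Nat.card {π : Equiv.Perm (Fin n) // Avoids231 ⇑π ∧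
        π ⟨0, by omega⟩ < π ⟨1, by omega⟩} =
      Nat.choose (2 * (n - 1)) (n - 1) / n := by
  open Equiv Av231 in
  obtain ⟨m, rfl⟩ : ∃ m, n = m + 1 := ⟨n - 1, by omega⟩
  have hm : 1 ≤ m := by omega
  have key : ∀ π : Perm (Fin (m+1)), Avoids231 ⇑π →
      ((π ⟨0, by omega⟩ < π ⟨1, by omega⟩) ↔ π 0 = 0) := by
    intro π hav
    have hz : (⟨0, by omega⟩ : Fin (m+1)) = 0 := Fin.ext (by simp)
    rw [hz]
    constructor
    · intro h
      by_contra hne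
      set k := π.symm 0 with hkdef
      have hk : π k = 0 := π.apply_symm_apply 0
      have hk0 : k ≠ 0 := by
        intro he; rw [he] at hk; exact hne hk
      have hk1 : k ≠ ⟨1, by omega⟩ := by
        intro he
        rw [he] at hk
        have h1 : (π (⟨1, by omega⟩ : Fin (m+1))).val = 0 := by rw [hk]; rfl
        have h2 : (π (0 : Fin (m+1))).val < (π (⟨1, by omega⟩ : Fin (m+1))).val := h
        omega
      have hkv0 : k.val ≠ 0 := fun he => hk0 (Fin.ext (by simpa using he))
      have hkv1 : k.val ≠ 1 := fun he => hk1 (Fin.ext (by simpa using he))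
      have hpz : 0 < (π (0 : Fin (m+1))).val := by
        rcases Nat.eq_zero_or_pos (π (0 : Fin (m+1))).val with h' | h'
        · exact absurd (Fin.ext h') hne
        · exact h'
      refine hav ⟨0, ⟨1, by omega⟩, k, ?_, ?_, ?_, h⟩
      · show (0 : ℕ) < 1; omega
      · show (1 : ℕ) < k.val; omega
      · show (π k).val < (π (0 : Fin (m+1))).val
        rw [hk]
        simpa using hpz
    · intro h
      have hne : π (⟨1, by omega⟩ : Fin (m+1)) ≠ 0 := by
        intro he
        have := π.injective (he.trans h.symm)
        have := Fin.ext_iff.1 this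
        simp at this
      show (π (0 : Fin (m+1))).val < (π (⟨1, by omega⟩ : Fin (m+1))).val
      rw [h]
      have : (π (⟨1, by omega⟩ : Fin (m+1))).val ≠ 0 :=
        fun he => hne (Fin.ext (by simpa using he))
      simp only [Fin.val_zero]
      omega
  have e1 : {π : Perm (Fin (m+1)) // Avoids231 ⇑π ∧
        π ⟨0, by omega⟩ < π ⟨1, by omega⟩}
      ≃ {π : Perm (Fin (m+1)) // Avoids231 ⇑π ∧ π 0 = 0} :=
    Equiv.subtypeEquivRight fun π => and_congr_right fun hav => key π hav
  rw [Nat.card_congr e1, card_zero_fix, avcard_eq, catalan_eq_centralBinom_div,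
    Nat.centralBinom]
  simp
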